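/- Let s ∈ (0,1). For every u ∈ C^1_c(ℝ^N), the Gagliardo seminorm satisfies the interpolation inequality [u]_{W^{s,1}(ℝ^N)} ≤ (2^{1-s} N ω_N / ((1-s) s)) · (∫_{ℝ^N} |∇u| dx)^s · (∫_{ℝ^N} |u| dx)^{1-s}. -/

import Mathlib

open MeasureTheory Metric Set
open scoped ENNReal

/-!
For every translation `h`, the fundamental theorem of calculus along segments and the triangle
inequality give `∫ |u (x + h) - u x| dx ≤ min (‖∇u‖₁ |h|) (2 ‖u‖₁)`. Integrating this modulus
against `|h| ^ (-N - s)` in polar coordinates leaves a one-dimensional integral which, split at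
the radius `2 ‖u‖₁ / ‖∇u‖₁` where the two bounds cross, equals
`N ω_N ‖∇u‖₁ ^ s (2 ‖u‖₁) ^ (1 - s) (1 / (1 - s) + 1 / s)`. Splitting there is the same as
optimizing the additive estimate over dilations.
-/

section Translation

variable {G F : Type*} [AddGroup G] [MeasurableSpace G] [MeasurableAdd G] [NormedAddCommGroup F]

theorem lintegral_enorm_add_sub_le_two_mul (μ : Measure G) [μ.IsAddRightInvariant] {u : G → F}
    (hu : AEStronglyMeasurable u μ) (h : G) :
    ∫⁻ x, ‖u (x + h) - u x‖ₑ ∂μ ≤ 2 * ∫⁻ x, ‖u x‖ₑ ∂μ :=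
  calc ∫⁻ x, ‖u (x + h) - u x‖ₑ ∂μ ≤ ∫⁻ x, ‖u (x + h)‖ₑ + ‖u x‖ₑ ∂μ :=
        lintegral_mono fun x ↦ enorm_sub_le
    _ = 2 * ∫⁻ x, ‖u x‖ₑ ∂μ := by
        rw [lintegral_add_right' _ hu.enorm, lintegral_add_right_eq_self (fun x ↦ ‖u x‖ₑ) h,
          two_mul]

end Translation

section FundamentalTheorem

variable {E F : Type*} [NormedAddCommGroup E] [NormedSpace ℝ E]
  [NormedAddCommGroup F] [NormedSpace ℝ F] [CompleteSpace F] {u : E → F}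

theorem enorm_add_sub_le_lintegral_enorm_fderiv (hu : ContDiff ℝ 1 u) (x h : E) :
    ‖u (x + h) - u x‖ₑ ≤ ∫⁻ t in Ioc (0 : ℝ) 1, ‖fderiv ℝ u (x + t • h)‖ₑ * ‖h‖ₑ := by
  have hline : ∀ t : ℝ, HasDerivAt (fun t : ℝ ↦ u (x + t • h)) (fderiv ℝ u (x + t • h) h) t :=
    fun t ↦ ((hu.differentiable one_ne_zero _).hasFDerivAt).comp_hasDerivAt t
      (((hasDerivAt_id t).smul_const h).const_add x |>.congr_deriv (one_smul ℝ h))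
  have hcont : Continuous fun t : ℝ ↦ fderiv ℝ u (x + t • h) h :=
    ((hu.continuous_fderiv one_ne_zero).comp (by fun_prop)).clm_apply continuous_const
  have hftc : u (x + h) - u x = ∫ t in Ioc (0 : ℝ) 1, fderiv ℝ u (x + t • h) h := by
    rw [← intervalIntegral.integral_of_le zero_le_one,
      intervalIntegral.integral_eq_sub_of_hasDerivAt (fun t _ ↦ hline t)
        (hcont.intervalIntegrable 0 1)]
    simp
  rw [hftc]
  exact (enorm_integral_le_lintegral_enorm _).trans
    (lintegral_mono fun t ↦ (fderiv ℝ u (x + t • h)).le_opENorm h)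

variable [MeasurableSpace E] [BorelSpace E] (μ : Measure E) [μ.IsAddRightInvariant] [SFinite μ]

theorem lintegral_enorm_add_sub_le_lintegral_enorm_fderiv_mul (hu : ContDiff ℝ 1 u) (h : E) :
    ∫⁻ x, ‖u (x + h) - u x‖ₑ ∂μ ≤ (∫⁻ x, ‖fderiv ℝ u x‖ₑ ∂μ) * ‖h‖ₑ :=
  calc ∫⁻ x, ‖u (x + h) - u x‖ₑ ∂μ
      ≤ ∫⁻ x, (∫⁻ t in Ioc (0 : ℝ) 1, ‖fderiv ℝ u (x + t • h)‖ₑ * ‖h‖ₑ) ∂μ :=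
        lintegral_mono fun x ↦ enorm_add_sub_le_lintegral_enorm_fderiv hu x h
    _ = ∫⁻ t in Ioc (0 : ℝ) 1, ∫⁻ x, ‖fderiv ℝ u (x + t • h)‖ₑ * ‖h‖ₑ ∂μ :=
        lintegral_lintegral_swap <| Measurable.aemeasurable <|
          ((hu.continuous_fderiv one_ne_zero).comp (by fun_prop)).enorm.measurable.mul_const _
    _ = ∫⁻ t in Ioc (0 : ℝ) 1, (∫⁻ x, ‖fderiv ℝ u x‖ₑ ∂μ) * ‖h‖ₑ := by
        simp_rw [lintegral_mul_const' _ _ enorm_ne_top,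
          lintegral_add_right_eq_self (fun x ↦ ‖fderiv ℝ u x‖ₑ)]
    _ = (∫⁻ x, ‖fderiv ℝ u x‖ₑ ∂μ) * ‖h‖ₑ := by simp

end FundamentalTheorem

section CompactSupport

variable {E F : Type*} [NormedAddCommGroup E] [NormedSpace ℝ E] [MeasurableSpace E] [BorelSpace E]
  [NormedAddCommGroup F] [NormedSpace ℝ F] [CompleteSpace F] {u : E → F}
  (μ : Measure E) [μ.IsAddRightInvariant] [IsFiniteMeasureOnCompacts μ] [SFinite μ]

theorem HasCompactSupport.lintegral_enorm_add_sub_le_min (hu : ContDiff ℝ 1 u)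
    (hcs : HasCompactSupport u) (h : E) :
    ∫⁻ x, ‖u (x + h) - u x‖ₑ ∂μ ≤
      ENNReal.ofReal (min ((∫ x, ‖fderiv ℝ u x‖ ∂μ) * ‖h‖) (2 * ∫ x, ‖u x‖ ∂μ)) := by
  have hu_int : Integrable u μ := hu.continuous.integrable_of_hasCompactSupport hcs
  have hdu_int : Integrable (fderiv ℝ u) μ :=
    (hu.continuous_fderiv one_ne_zero).integrable_of_hasCompactSupport (hcs.fderiv (𝕜 := ℝ))
  rw [ENNReal.ofReal_min, ENNReal.ofReal_mul (integral_nonneg fun _ ↦ norm_nonneg _),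
    ofReal_integral_norm_eq_lintegral_enorm hdu_int, ofReal_norm,
    ENNReal.ofReal_mul zero_le_two, ofReal_integral_norm_eq_lintegral_enorm hu_int,
    ENNReal.ofReal_ofNat]
  exact le_min (lintegral_enorm_add_sub_le_lintegral_enorm_fderiv_mul μ hu h)
    (lintegral_enorm_add_sub_le_two_mul μ hu_int.aestronglyMeasurable h)

end CompactSupport

section Gagliardo

variable {E F : Type*} [NormedAddCommGroup E] [MeasurableSpace E] [BorelSpace E]
  [SecondCountableTopology E] [NormedAddCommGroup F]
  (μ : Measure E) [μ.IsAddLeftInvariant] [SFinite μ]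

theorem lintegral_lintegral_ofReal_div_norm_sub_rpow_le {u : E → F} (hu : Continuous u) {p : ℝ}
    (hp : 0 < p) {ω : ℝ → ℝ} (hω : ∀ h, ∫⁻ x, ‖u (x + h) - u x‖ₑ ∂μ ≤ ENNReal.ofReal (ω ‖h‖)) :
    ∫⁻ x, ∫⁻ y, ENNReal.ofReal (‖u x - u y‖ / ‖x - y‖ ^ p) ∂μ ∂μ ≤
      ∫⁻ h, ENNReal.ofReal (ω ‖h‖ / ‖h‖ ^ p) ∂μ := by
  calc ∫⁻ x, ∫⁻ y, ENNReal.ofReal (‖u x - u y‖ / ‖x - y‖ ^ p) ∂μ ∂μ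
      = ∫⁻ x, ∫⁻ h, ENNReal.ofReal (‖u (x + h) - u x‖ / ‖h‖ ^ p) ∂μ ∂μ := by
        refine lintegral_congr fun x ↦ ?_
        rw [← lintegral_add_left_eq_self _ x]
        simp [norm_sub_rev]
    _ = ∫⁻ h, ∫⁻ x, ENNReal.ofReal (‖u (x + h) - u x‖ / ‖h‖ ^ p) ∂μ ∂μ :=
        lintegral_lintegral_swap <| Measurable.aemeasurable <| Measurable.ennreal_ofReal <|
          ((hu.comp continuous_add).sub (hu.comp continuous_fst)).norm.measurable.div
            (continuous_snd.norm.measurable.pow_const p)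
    _ ≤ ∫⁻ h, ENNReal.ofReal (ω ‖h‖ / ‖h‖ ^ p) ∂μ := lintegral_mono fun h ↦ ?_
  rcases eq_or_ne h 0 with rfl | hh
  · simp [Real.zero_rpow hp.ne']
  have hc : 0 < ‖h‖ ^ p := by positivity
  simp_rw [ENNReal.ofReal_div_of_pos hc, ofReal_norm, div_eq_mul_inv]
  rw [lintegral_mul_const' _ _ (ENNReal.inv_ne_top.2 (ENNReal.ofReal_pos.2 hc).ne')]
  exact mul_le_mul_left (hω h) _

end Gagliardo

section Polar

variable {E : Type*} [NormedAddCommGroup E] [NormedSpace ℝ E] [MeasurableSpace E] [BorelSpace E]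
  [Nontrivial E] [FiniteDimensional ℝ E] (μ : Measure E) [μ.IsAddHaarMeasure]

local notation "dim" => Module.finrank ℝ

theorem lintegral_fun_norm_addHaar (f : ℝ → ℝ≥0∞) (hf : Measurable f) :
    ∫⁻ x, f ‖x‖ ∂μ = dim E * μ (ball 0 1) *
      ∫⁻ r in Ioi (0 : ℝ), ENNReal.ofReal (r ^ (dim E - 1)) * f r :=
  calc
    ∫⁻ x, f ‖x‖ ∂μ = ∫⁻ x : ({(0)}ᶜ : Set E), f ‖x.1‖ ∂(μ.comap (↑)) := by
      rw [lintegral_subtype_comap (measurableSet_singleton _).compl fun x ↦ f ‖x‖,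
        restrict_compl_singleton]
    _ = ∫⁻ p : sphere (0 : E) 1 × Ioi (0 : ℝ), f p.2
          ∂μ.toSphere.prod (.volumeIoiPow (dim E - 1)) := by
      rw [← μ.measurePreserving_homeomorphUnitSphereProd.lintegral_comp_emb
        (Homeomorph.measurableEmbedding _) fun p ↦ f p.2]
      simp [homeomorphUnitSphereProd]
    _ = μ.toSphere univ * ∫⁻ r : Ioi (0 : ℝ), f r ∂(.volumeIoiPow (dim E - 1)) := by
      rw [lintegral_prod (fun p : sphere (0 : E) 1 × Ioi (0 : ℝ) ↦ f p.2)
        (hf.comp (measurable_subtype_coe.comp measurable_snd)).aemeasurable]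
      simp [lintegral_const, mul_comm]
    _ = _ := by
      rw [Measure.toSphere_apply_univ, Measure.volumeIoiPow,
        lintegral_withDensity_eq_lintegral_mul _
          (measurable_subtype_coe.pow_const _).ennreal_ofReal
          (by exact hf.comp measurable_subtype_coe : Measurable fun r : Ioi (0 : ℝ) ↦ f r)]
      exact congrArg _ (lintegral_subtype_comap measurableSet_Ioi
        fun r ↦ ENNReal.ofReal (r ^ (dim E - 1)) * f r)

theorem lintegral_ofReal_div_norm_rpow (g : ℝ → ℝ) (hg : Measurable g) (s : ℝ) :
    ∫⁻ x, ENNReal.ofReal (g ‖x‖ / ‖x‖ ^ ((dim E : ℝ) + s)) ∂μ =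
      dim E * μ (ball 0 1) * ∫⁻ r in Ioi (0 : ℝ), ENNReal.ofReal (g r * r ^ (-1 - s)) := by
  rw [lintegral_fun_norm_addHaar μ (fun r ↦ ENNReal.ofReal (g r / r ^ ((dim E : ℝ) + s)))
    (hg.div (measurable_id.pow_const _)).ennreal_ofReal]
  refine congrArg _ (setLIntegral_congr_fun measurableSet_Ioi fun r (hr : 0 < r) ↦ ?_)
  have hdim : ((dim E - 1 : ℕ) : ℝ) = dim E - 1 := by
    rw [Nat.cast_sub Module.finrank_pos, Nat.cast_one]
  rw [← ENNReal.ofReal_mul (by positivity), ← Real.rpow_natCast, hdim, mul_div_assoc',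
    div_eq_mul_inv, ← Real.rpow_neg hr.le, mul_right_comm, ← Real.rpow_add hr]
  ring_nf

end Polar

theorem lintegral_Ioc_ofReal_rpow_sub_one {c t : ℝ} (hc : 0 ≤ c) (ht : 0 < t) :
    ∫⁻ r in Ioc 0 c, ENNReal.ofReal (r ^ (t - 1)) = ENNReal.ofReal (c ^ t / t) := by
  rw [← ofReal_integral_eq_lintegral_ofReal
    (intervalIntegral.intervalIntegrable_rpow' (by linarith)).1
    ((ae_restrict_mem measurableSet_Ioc).mono fun r hr ↦ Real.rpow_nonneg hr.1.le _),
    ← intervalIntegral.integral_of_le hc, integral_rpow (.inl (by linarith)),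
    Real.zero_rpow (by linarith), sub_zero, sub_add_cancel]

theorem lintegral_Ioi_ofReal_rpow_neg_sub_one {c t : ℝ} (hc : 0 < c) (ht : 0 < t) :
    ∫⁻ r in Ioi c, ENNReal.ofReal (r ^ (-t - 1)) = ENNReal.ofReal (c ^ (-t) / t) := by
  rw [← ofReal_integral_eq_lintegral_ofReal (integrableOn_Ioi_rpow_of_lt (by linarith) hc)
    ((ae_restrict_mem measurableSet_Ioi).mono fun r hr ↦ Real.rpow_nonneg (hc.trans hr).le _),
    integral_Ioi_rpow_of_lt (by linarith) hc, sub_add_cancel, neg_div_neg_eq]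

theorem lintegral_Ioi_ofReal_min_mul_rpow {a b s : ℝ} (ha : 0 ≤ a) (hb : 0 ≤ b)
    (hs : s ∈ Ioo 0 1) :
    ∫⁻ r in Ioi 0, ENNReal.ofReal (min (a * r) b * r ^ (-1 - s)) =
      ENNReal.ofReal (a ^ s * b ^ (1 - s) / ((1 - s) * s)) := by
  obtain ⟨hs0, hs1⟩ := hs
  rcases ha.eq_or_lt with rfl | ha
  · simp [min_eq_left hb, Real.zero_rpow hs0.ne']
  rcases hb.eq_or_lt with rfl | hb
  · rw [Real.zero_rpow (by linarith), mul_zero, zero_div, ENNReal.ofReal_zero]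
    refine (setLIntegral_congr_fun measurableSet_Ioi fun r (hr : 0 < r) ↦ ?_).trans lintegral_zero
    rw [min_eq_right (by positivity), zero_mul, ENNReal.ofReal_zero]
  set r₀ := b / a with hr₀
  have hr₀_pos : 0 < r₀ := by positivity
  have hlow : ∫⁻ r in Ioc 0 r₀, ENNReal.ofReal (min (a * r) b * r ^ (-1 - s)) =
      ENNReal.ofReal (a * (r₀ ^ (1 - s) / (1 - s))) := by
    rw [ENNReal.ofReal_mul ha.le, ← lintegral_Ioc_ofReal_rpow_sub_one hr₀_pos.le (by linarith),
      ← lintegral_const_mul' _ _ ENNReal.ofReal_ne_top]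
    refine setLIntegral_congr_fun measurableSet_Ioc fun r ⟨hr, hrr₀⟩ ↦ ?_
    rw [min_eq_left ((le_div_iff₀' ha).1 hrr₀), ← ENNReal.ofReal_mul ha.le, mul_assoc,
      ← Real.rpow_one_add' hr.le (by linarith)]
    ring_nf
  have hhigh : ∫⁻ r in Ioi r₀, ENNReal.ofReal (min (a * r) b * r ^ (-1 - s)) =
      ENNReal.ofReal (b * (r₀ ^ (-s) / s)) := by
    rw [ENNReal.ofReal_mul hb.le, ← lintegral_Ioi_ofReal_rpow_neg_sub_one hr₀_pos hs0,
      ← lintegral_const_mul' _ _ ENNReal.ofReal_ne_top]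
    refine setLIntegral_congr_fun measurableSet_Ioi fun r (hr : r₀ < r) ↦ ?_
    rw [min_eq_right ((div_le_iff₀' ha).1 hr.le), ← ENNReal.ofReal_mul hb.le]
    ring_nf
  have hK : b * r₀ ^ (-s) = a ^ s * b ^ (1 - s) := by
    rw [Real.rpow_neg hr₀_pos.le, Real.div_rpow hb.le ha.le, Real.rpow_sub hb, Real.rpow_one]
    field_simp
  have hK' : a * r₀ ^ (1 - s) = b * r₀ ^ (-s) := by
    rw [sub_eq_add_neg, Real.rpow_add hr₀_pos, Real.rpow_one, ← mul_assoc, hr₀,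
      mul_div_cancel₀ _ ha.ne']
  rw [← Ioc_union_Ioi_eq_Ioi hr₀_pos.le, lintegral_union measurableSet_Ioi Ioc_disjoint_Ioi_same,
    hlow, hhigh, ← ENNReal.ofReal_add (by positivity) (by positivity), mul_div_assoc',
    mul_div_assoc', hK', hK]
  congr 1
  field_simp
  ring

theorem gagliardo_interpolation {N : ℕ} (s : ℝ) (hs : s ∈ Set.Ioo (0 : ℝ) 1)
    (u : EuclideanSpace ℝ (Fin N) → ℝ) (hu : ContDiff ℝ 1 u)
    (hcs : HasCompactSupport u) :
    ∫⁻ x, ∫⁻ y, ENNReal.ofReal (|u x - u y| / ‖x - y‖ ^ ((N : ℝ) + s)) ≤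
      ENNReal.ofReal ((2 : ℝ) ^ (1 - s) * (N : ℝ) *
        (volume (Metric.ball (0 : EuclideanSpace ℝ (Fin N)) 1)).toReal / ((1 - s) * s) *
        (∫ x, ‖fderiv ℝ u x‖) ^ s * (∫ x, |u x|) ^ (1 - s)) := by
  rcases N.eq_zero_or_pos with rfl | hN
  · simp [Subsingleton.elim _ (0 : EuclideanSpace ℝ (Fin 0))]
  have : Nontrivial (EuclideanSpace ℝ (Fin N)) :=
    Module.nontrivial_of_finrank_pos (R := ℝ) (by rwa [finrank_euclideanSpace_fin])
  simp only [← Real.norm_eq_abs]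
  set A := ∫ x, ‖fderiv ℝ u x‖
  set B := ∫ x, ‖u x‖
  have hA : 0 ≤ A := integral_nonneg fun _ ↦ norm_nonneg _
  have hB : 0 ≤ B := integral_nonneg fun _ ↦ norm_nonneg _
  calc _ ≤ ∫⁻ h : EuclideanSpace ℝ (Fin N),
          ENNReal.ofReal (min (A * ‖h‖) (2 * B) / ‖h‖ ^ ((N : ℝ) + s)) :=
        lintegral_lintegral_ofReal_div_norm_sub_rpow_le volume hu.continuous (p := N + s)
          (ω := fun r ↦ min (A * r) (2 * B)) (by linarith [hs.1])
          (hcs.lintegral_enorm_add_sub_le_min volume hu)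
    _ = N * volume (ball (0 : EuclideanSpace ℝ (Fin N)) 1) *
          ENNReal.ofReal (A ^ s * (2 * B) ^ (1 - s) / ((1 - s) * s)) := by
        have hpolar := lintegral_ofReal_div_norm_rpow (volume : Measure (EuclideanSpace ℝ (Fin N)))
          (fun r ↦ min (A * r) (2 * B)) (by fun_prop) s
        rw [finrank_euclideanSpace_fin] at hpolar
        rw [hpolar, lintegral_Ioi_ofReal_min_mul_rpow hA (by positivity) hs]
    _ = _ := by
        nth_rw 1 [Real.mul_rpow zero_le_two hB, ← ENNReal.ofReal_natCast,
          ← ENNReal.ofReal_toReal measure_ball_lt_top.ne, ← ENNReal.ofReal_mul (by positivity),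
          ← ENNReal.ofReal_mul (by positivity)]
        congr 1
        ring
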